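/- Tweedie's formula: let $t = \eta + Z$ where $Z \sim N(0,1)$ is independent of $\eta$, which has prior density $\pi$, and let $p(t) = \int_{-\infty}^{\infty} \phi(t - \eta) \pi(\eta)\, d\eta$ be the marginal density ($\phi$ the standard normal density). Then the posterior mean satisfies $\mathbb{E}[\eta \mid t] = t + \frac{p'(t)}{p(t)}$ at every $t$ with $p(t) > 0$, assuming differentiation under the integral sign is valid (e.g., $\pi$ integrable with finite first moment). -/

import Mathlib

open MeasureTheory

/-- The standard normal density. -/
noncomputable def stdNormalPdf (x : ℝ) : ℝ :=
  (Real.sqrt (2 * Real.pi))⁻¹ * Real.exp (-x ^ 2 / 2)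

theorem integral_sub_const_mul_eq {μ : Measure ℝ} {g : ℝ → ℝ} (t : ℝ) (hg : Integrable g μ)
    (hxg : Integrable (fun x => x * g x) μ) :
    ∫ x, (x - t) * g x ∂μ = ∫ x, x * g x ∂μ - t * ∫ x, g x ∂μ := by
  simp_rw [sub_mul]
  rw [integral_sub hxg (hg.const_mul t), integral_const_mul]

theorem stmt12_general (pr : ℝ → ℝ)
    (p : ℝ → ℝ) (hp : ∀ t, p t = ∫ η, stdNormalPdf (t - η) * pr η)
    (t : ℝ) (hpt : 0 < p t)
    (hint0 : Integrable (fun η => stdNormalPdf (t - η) * pr η))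
    (hint1 : Integrable (fun η => η * stdNormalPdf (t - η) * pr η))
    (hderiv : HasDerivAt p (∫ η, (η - t) * stdNormalPdf (t - η) * pr η) t) :
    (∫ η, η * stdNormalPdf (t - η) * pr η) / p t = t + deriv p t / p t := by
  simp_rw [mul_assoc] at hint1 hderiv ⊢
  have hd : deriv p t = (∫ η, η * (stdNormalPdf (t - η) * pr η)) - t * p t := by
    rw [hderiv.deriv, integral_sub_const_mul_eq t hint0 hint1, hp]
  rw [hd]
  field_simp
  ring

/-- Tweedie's formula: with marginal density `p(t) = ∫ φ(t-η) π(η) dη`, at any `t`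
with `p(t) > 0`, assuming differentiation under the integral sign is valid
(i.e. `p'(t) = ∫ (η - t) φ(t-η) π(η) dη`) and the relevant integrability, the
posterior mean satisfies `E[η ∣ t] = t + p'(t)/p(t)`. -/
theorem stmt12 (pr : ℝ → ℝ) (hpr : ∀ η, 0 ≤ pr η)
    (hpr1 : ∫ η, pr η = 1)
    (p : ℝ → ℝ) (hp : ∀ t, p t = ∫ η, stdNormalPdf (t - η) * pr η)
    (t : ℝ) (hpt : 0 < p t)
    (hint0 : Integrable (fun η => stdNormalPdf (t - η) * pr η))
    (hint1 : Integrable (fun η => η * stdNormalPdf (t - η) * pr η))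
    (hderiv : HasDerivAt p (∫ η, (η - t) * stdNormalPdf (t - η) * pr η) t) :
    (∫ η, η * stdNormalPdf (t - η) * pr η) / p t = t + deriv p t / p t :=
  stmt12_general pr p hp t hpt hint0 hint1 hderiv
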